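/- Let n qubits sit on the vertices of a graph G = (V,E), with ergodic single-qubit dissipators D_i, two-qubit correlators F_e, a probability distribution {p_e} on E, and the multivariate channel E_{ε⃗}(ρ) = ∑_{e=(i,j)∈E} p_e ( (1−ε_e)/2 · (D_i(ρ) + D_j(ρ)) + ε_e · F_e(ρ) ) with unique steady state ρ∞(ε⃗) for every ε⃗ ∈ [0,1)^{|E|}. Then each matrix entry of ρ∞(ε⃗) in the computational basis, as a function of the real variables ε⃗ = (ε_e)_{e∈E}, is analytic on an open set of ℝ^{|E|} containing the cube [0,1)^{|E|}. -/

import Mathlib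

/-!
For a positive trace-preserving map `T` on matrices with a unique fixed density matrix `σ`, every
fixed point of trace zero vanishes: the positive and negative parts of a Hermitian fixed point are
again fixed (a trace comparison against the projection onto the positive spectral subspace), hence
both are multiples of `σ`; being orthogonal, they vanish. A positive map commutes with taking
adjoints, so the general case follows from the real and imaginary parts. Consequently the map
`X ↦ X - T X + Tr(X) • 1` is injective and sends `σ` to `1`. For the channel `E_ε` its matrix
depends affinely on `ε` and is invertible on the cube, so by Cramer's rule `ρ∞(ε)` is a rational
function of `ε` whose denominator, a determinant, does not vanish on an open set containing the
cube.
-/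

namespace SSP

noncomputable section

open Matrix
open scoped ComplexOrder

/-- Computational basis labels for `n` qubits. -/
abbrev Idx (n : ℕ) := Fin n → Fin 2

/-- Operators (matrices) on the Hilbert space of `n` qubits. -/
abbrev Op (n : ℕ) := Matrix (Idx n) (Idx n) ℂ

/-- Super-operators on `n` qubits. -/
abbrev SOp (n : ℕ) := Op n →ₗ[ℂ] Op n

/-- The operator norm (largest singular value) of a complex matrix. -/
noncomputable def opNorm {m : Type*} [Fintype m] [DecidableEq m]
    (M : Matrix m m ℂ) : ℝ :=
  ‖Matrix.toEuclideanCLM (𝕜 := ℂ) M‖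

/-- A density matrix: positive semidefinite with unit trace. -/
def IsDensity {n : ℕ} (ρ : Op n) : Prop := ρ.PosSemidef ∧ ρ.trace = 1

/-- An operator is supported on the set `S` of qubits if it has the form
`Ô_S ⊗ 1` on the remaining qubits. -/
def SupportedOn {n : ℕ} (S : Set (Fin n)) (M : Op n) : Prop :=
  (∀ x y : Idx n, (∃ i ∉ S, x i ≠ y i) → M x y = 0) ∧
  (∀ x y x' y' : Idx n,
      (∀ i ∈ S, x i = x' i) → (∀ i ∈ S, y i = y' i) →
      (∀ i ∉ S, x i = y i) → (∀ i ∉ S, x' i = y' i) → M x y = M x' y')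

/-- The support of an operator: the smallest set of qubits supporting it
(the intersection of all supporting sets). -/
def suppOp {n : ℕ} (M : Op n) : Set (Fin n) :=
  {i | ∀ S : Set (Fin n), SupportedOn S M → i ∈ S}

/-- `E` is a quantum channel (CPTP map) acting only on the qubits in `S`:
it has a Kraus representation whose Kraus operators are all supported on `S`. -/
def IsChannelOn {n : ℕ} (S : Set (Fin n)) (E : SOp n) : Prop :=
  ∃ (m : ℕ) (F : Fin m → Op n),
    (∀ j, SupportedOn S (F j)) ∧
    (∑ j, (F j)ᴴ * F j = 1) ∧
    (∀ ρ, E ρ = ∑ j, F j * ρ * (F j)ᴴ)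

/-- A quantum channel on the whole system. -/
def IsChannel {n : ℕ} (E : SOp n) : Prop := IsChannelOn Set.univ E

/-- `Estar` is the adjoint of `E` with respect to the Hilbert–Schmidt
inner product `⟨A,B⟩ = Tr(A†B)`. -/
def IsHSAdjoint {n : ℕ} (E Estar : SOp n) : Prop :=
  ∀ A B : Op n, ((Estar A)ᴴ * B).trace = (Aᴴ * (E B)).trace

/-- An ergodic channel: it has a unique fixed point among density matrices,
this fixed point is full rank (positive definite), and there is no other
eigenvalue of modulus one. -/
def IsErgodic {n : ℕ} (E : SOp n) : Prop :=
  (∃ σ : Op n, IsDensity σ ∧ σ.PosDef ∧ E σ = σ ∧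
      ∀ ρ : Op n, IsDensity ρ → E ρ = ρ → ρ = σ) ∧
  (∀ μ : ℂ, Module.End.HasEigenvalue (E : Module.End ℂ (Op n)) μ → μ = 1 ∨ ‖μ‖ < 1)

/-- The set of qubits (endpoints) of an edge. -/
def edgeQubits {n : ℕ} (e : Sym2 (Fin n)) : Set (Fin n) := {i | i ∈ e}

/-- Finset of endpoints of an edge. -/
def edgeFinset' {n : ℕ} (e : Sym2 (Fin n)) : Finset (Fin n) :=
  Finset.univ.filter (· ∈ e)

/-- A Hamiltonian is geometrically `k`-local w.r.t. the graph `G`: it is a sum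
of Hermitian terms, each supported on a connected subset of `G` with at most
`k` vertices. -/
def GeomLocal {n : ℕ} (G : SimpleGraph (Fin n)) (k : ℕ) (H : Op n) : Prop :=
  ∃ (m : ℕ) (h : Fin m → Op n) (S : Fin m → Set (Fin n)),
    H = ∑ j, h j ∧
    ∀ j, (h j).IsHermitian ∧ SupportedOn (S j) (h j) ∧
      (S j).ncard ≤ k ∧ (G.induce (S j)).Preconnected

/-- The ball of radius `k` around a set of vertices, in the graph metric. -/
def Ball {n : ℕ} (G : SimpleGraph (Fin n)) (X : Set (Fin n)) (k : ℕ) :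
    Set (Fin n) :=
  {v | ∃ u ∈ X, ∃ w : G.Walk u v, w.length ≤ k}

/- Pauli matrices and the Wauli bases. -/
def PX : Matrix (Fin 2) (Fin 2) ℂ := !![0, 1; 1, 0]
def PY : Matrix (Fin 2) (Fin 2) ℂ := !![0, -Complex.I; Complex.I, 0]
def PZ : Matrix (Fin 2) (Fin 2) ℂ := !![1, 0; 0, -1]

/-- `W = (1/2)(1 + λ Z)`. -/
noncomputable def Wmat (l : ℝ) : Matrix (Fin 2) (Fin 2) ℂ :=
  (2⁻¹ : ℂ) • (1 + (l : ℂ) • PZ)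

/-- Single-qubit Wauli basis `{W, X/2, Y/2, Z/2}`. -/
noncomputable def wauli (l : ℝ) : Fin 4 → Matrix (Fin 2) (Fin 2) ℂ :=
  ![Wmat l, (2⁻¹ : ℂ) • PX, (2⁻¹ : ℂ) • PY, (2⁻¹ : ℂ) • PZ]

/-- Single-qubit dual Wauli basis `{1, X, Y, Z - λ·1}`. -/
noncomputable def dualWauli (l : ℝ) : Fin 4 → Matrix (Fin 2) (Fin 2) ℂ :=
  ![1, PX, PY, PZ - (l : ℂ) • 1]

/-- The `n`-qubit Wauli basis element `Q_α` (tensor product of the `Q_{α_i}`). -/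
noncomputable def Qmat {n : ℕ} (lam : Fin n → ℝ) (α : Fin n → Fin 4) : Op n :=
  Matrix.of fun x y => ∏ i, wauli (lam i) (α i) (x i) (y i)

/-- The `n`-qubit dual Wauli basis element `Q̃_α`. -/
noncomputable def Qdual {n : ℕ} (lam : Fin n → ℝ) (α : Fin n → Fin 4) : Op n :=
  Matrix.of fun x y => ∏ i, dualWauli (lam i) (α i) (x i) (y i)

/-- The support of a Wauli string. -/
def suppStr {n : ℕ} (α : Fin n → Fin 4) : Finset (Fin n) :=
  Finset.univ.filter (fun i => α i ≠ 0)

/-- The coefficient `c_α = Tr(Q_α O)` of the expansion `O = ∑_α c_α Q̃_α`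
in the dual Wauli basis. -/
noncomputable def QCoeff {n : ℕ} (lam : Fin n → ℝ) (O : Op n)
    (α : Fin n → Fin 4) : ℂ :=
  (Qmat lam α * O).trace

/-- The `Q1` norm: the `ℓ¹` norm of the dual-Wauli coefficient vector. -/
noncomputable def Q1Norm {n : ℕ} (lam : Fin n → ℝ) (O : Op n) : ℝ :=
  ∑ α : Fin n → Fin 4, ‖QCoeff lam O α‖

/-- The subspace `S_k`: the span of the dual Wauli operators `Q̃_α` with
`|α| ≤ k`. -/
def Sk {n : ℕ} (lam : Fin n → ℝ) (k : ℕ) : Submodule ℂ (Op n) :=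
  Submodule.span ℂ {Q | ∃ α : Fin n → Fin 4, (suppStr α).card ≤ k ∧ Q = Qdual lam α}

/-- The trace norm `Tr √(O†O)` of a matrix. -/
noncomputable def traceNorm {m : Type*} [Fintype m] [DecidableEq m]
    (M : Matrix m m ℂ) : ℝ :=
  (((Matrix.posSemidef_conjTranspose_mul_self M).1.eigenvectorUnitary : Matrix m m ℂ) *
      Matrix.diagonal (((↑) : ℝ → ℂ) ∘ Real.sqrt ∘ (Matrix.posSemidef_conjTranspose_mul_self M).1.eigenvalues) *
      (star (Matrix.posSemidef_conjTranspose_mul_self M).1.eigenvectorUnitary : Matrix m m ℂ)).trace.re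

section PositiveMaps

open scoped MatrixOrder ComplexStarModule

variable {m : Type*} [Fintype m]

lemma trace_star_mul_self_mul_star_mul_self (a b : Matrix m m ℂ) :
    (star a * a * (star b * b)).trace = (star (a * star b) * (a * star b)).trace := by
  rw [star_mul, star_star, ← Matrix.mul_assoc, trace_mul_comm]
  simp only [Matrix.mul_assoc]

variable [DecidableEq m]

lemma trace_mul_nonneg {A B : Matrix m m ℂ} (hA : 0 ≤ A) (hB : 0 ≤ B) : 0 ≤ (A * B).trace := by
  obtain ⟨a, rfl⟩ := CStarAlgebra.nonneg_iff_eq_star_mul_self.mp hA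
  obtain ⟨b, rfl⟩ := CStarAlgebra.nonneg_iff_eq_star_mul_self.mp hB
  rw [trace_star_mul_self_mul_star_mul_self]
  exact (posSemidef_conjTranspose_mul_self _).trace_nonneg

lemma mul_eq_zero_of_trace_mul_eq_zero {A B : Matrix m m ℂ} (hA : 0 ≤ A) (hB : 0 ≤ B)
    (h : (A * B).trace = 0) : A * B = 0 := by
  obtain ⟨a, rfl⟩ := CStarAlgebra.nonneg_iff_eq_star_mul_self.mp hA
  obtain ⟨b, rfl⟩ := CStarAlgebra.nonneg_iff_eq_star_mul_self.mp hB
  rw [trace_star_mul_self_mul_star_mul_self] at h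
  have hab : a * star b = 0 := trace_conjTranspose_mul_self_eq_zero_iff.mp h
  rw [Matrix.mul_assoc, ← Matrix.mul_assoc a, hab, Matrix.zero_mul, Matrix.mul_zero]

/-- `Q` is the spectral projection of `H` onto its positive eigenvalues. -/
lemma exists_mul_eq_posPart {H : Matrix m m ℂ} (hH : IsSelfAdjoint H) :
    ∃ Q : Matrix m m ℂ, 0 ≤ Q ∧ Q ≤ 1 ∧ H * Q = H⁺ := by
  have hcont : ∀ f : ℝ → ℝ, ContinuousOn f (spectrum ℝ H) := fun f =>
    finite_real_spectrum.continuousOn f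
  refine ⟨cfc (fun x : ℝ => if 0 < x then (1 : ℝ) else 0) H,
    cfc_nonneg fun x _ => by split_ifs <;> norm_num,
    cfc_le_one _ _ fun x _ => by split_ifs <;> norm_num, ?_⟩
  nth_rewrite 1 [← cfc_id' ℝ H]
  rw [← cfc_mul _ _ H (hcont _) (hcont _), CFC.posPart_def, cfcₙ_eq_cfc]
  refine cfc_congr fun x _ => ?_
  by_cases hx : 0 < x
  · simp [hx, hx.le]
  · simp [hx, posPart_eq_zero.mpr (not_lt.mp hx)]

variable {T : Module.End ℂ (Matrix m m ℂ)}

lemma isSelfAdjoint_map_of_nonneg (hT : ∀ X, 0 ≤ X → 0 ≤ T X) {H : Matrix m m ℂ}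
    (hH : IsSelfAdjoint H) : IsSelfAdjoint (T H) := by
  rw [← CFC.posPart_sub_negPart H hH, map_sub]
  exact (hT _ (CFC.posPart_nonneg H)).isSelfAdjoint.sub (hT _ (CFC.negPart_nonneg H)).isSelfAdjoint

lemma map_star_of_nonneg (hT : ∀ X, 0 ≤ X → 0 ≤ T X) (X : Matrix m m ℂ) :
    T (star X) = star (T X) := by
  have hre := isSelfAdjoint_map_of_nonneg hT (ℜ X).2
  have him := isSelfAdjoint_map_of_nonneg hT (ℑ X).2
  rw [← realPart_add_I_smul_imaginaryPart X]
  simp only [star_add, star_smul, map_add, map_smul, (ℜ X).2.star_eq, (ℑ X).2.star_eq,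
    hre.star_eq, him.star_eq, Complex.star_def, Complex.conj_I]

lemma map_posPart_eq_of_map_eq_self (hT : ∀ X, 0 ≤ X → 0 ≤ T X)
    (htr : ∀ X, (T X).trace = X.trace) {H : Matrix m m ℂ} (hH : IsSelfAdjoint H)
    (hfix : T H = H) : T H⁺ = H⁺ := by
  obtain ⟨Q, hQ, hQ1, hHQ⟩ := exists_mul_eq_posPart hH
  have h1Q : 0 ≤ 1 - Q := sub_nonneg.mpr hQ1
  have hP := hT _ (CFC.posPart_nonneg H)
  have hN := hT _ (CFC.negPart_nonneg H)
  have hTH : T H⁺ - T H⁻ = H := by rw [← map_sub, CFC.posPart_sub_negPart H hH, hfix]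
  have hPQ : T H⁺ * Q = H⁺ + T H⁻ * Q := by
    rw [← sub_add_cancel (T H⁺) (T H⁻), hTH, Matrix.add_mul, hHQ]
  -- `Tr (T H⁺) = Tr H⁺` splits into two nonnegative traces that must both vanish
  have htrace : (T H⁻ * Q).trace + (T H⁺ * (1 - Q)).trace = 0 := by
    have h := htr H⁺
    rw [← Matrix.mul_one (T H⁺), ← add_sub_cancel Q 1, Matrix.mul_add, trace_add, hPQ,
      trace_add] at h
    linear_combination h
  obtain ⟨hNQ, hP1Q⟩ := (add_eq_zero_iff_of_nonneg (trace_mul_nonneg hN hQ)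
    (trace_mul_nonneg hP h1Q)).mp htrace
  calc T H⁺ = T H⁺ * Q + T H⁺ * (1 - Q) := by
        rw [← Matrix.mul_add, add_sub_cancel, Matrix.mul_one]
    _ = H⁺ := by
      rw [mul_eq_zero_of_trace_mul_eq_zero hP h1Q hP1Q, hPQ,
        mul_eq_zero_of_trace_mul_eq_zero hN hQ hNQ, add_zero, add_zero]

omit [DecidableEq m] in
lemma eq_trace_smul_of_map_eq_self {σ : Matrix m m ℂ}
    (huniq : ∀ ρ, 0 ≤ ρ → ρ.trace = 1 → T ρ = ρ → ρ = σ) {X : Matrix m m ℂ} (hX : 0 ≤ X)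
    (hfix : T X = X) : X = X.trace • σ := by
  by_cases h0 : X.trace = 0
  · rw [h0, zero_smul]
    exact hX.posSemidef.trace_eq_zero_iff.mp h0
  · have hX' : 0 ≤ X.trace⁻¹ • X :=
      (hX.posSemidef.smul (inv_nonneg.mpr hX.posSemidef.trace_nonneg)).nonneg
    have hρ := huniq _ hX' (by rw [trace_smul, smul_eq_mul, inv_mul_cancel₀ h0])
      (by rw [map_smul, hfix])
    rw [← hρ, smul_smul, mul_inv_cancel₀ h0, one_smul]

lemma eq_zero_of_isSelfAdjoint_of_map_eq_self (hT : ∀ X, 0 ≤ X → 0 ≤ T X)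
    (htr : ∀ X, (T X).trace = X.trace) {σ : Matrix m m ℂ}
    (huniq : ∀ ρ, 0 ≤ ρ → ρ.trace = 1 → T ρ = ρ → ρ = σ) {H : Matrix m m ℂ}
    (hH : IsSelfAdjoint H) (hfix : T H = H) (h0 : H.trace = 0) : H = 0 := by
  have hdecomp := CFC.posPart_sub_negPart H hH
  have hP := map_posPart_eq_of_map_eq_self hT htr hH hfix
  have hN : T H⁻ = H⁻ := by
    rw [← sub_sub_cancel H⁺ H⁻, hdecomp, map_sub, hP, hfix]
  have htrace : H⁺.trace = H⁻.trace := by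
    rw [← sub_eq_zero, ← trace_sub, hdecomp, h0]
  have hPN : H⁺ = H⁻ := calc
    H⁺ = H⁺.trace • σ := eq_trace_smul_of_map_eq_self huniq (CFC.posPart_nonneg H) hP
    _ = H⁻.trace • σ := by rw [htrace]
    _ = H⁻ := (eq_trace_smul_of_map_eq_self huniq (CFC.negPart_nonneg H) hN).symm
  have hP0 : H⁺ = 0 := by
    apply conjTranspose_mul_self_eq_zero.mp
    rw [← star_eq_conjTranspose, (CFC.posPart_nonneg H).isSelfAdjoint.star_eq]
    nth_rewrite 2 [hPN]
    exact CFC.posPart_mul_negPart H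
  rw [← hdecomp, ← hPN, hP0, sub_zero]

theorem eq_zero_of_map_eq_self_of_trace_eq_zero (hT : ∀ X, 0 ≤ X → 0 ≤ T X)
    (htr : ∀ X, (T X).trace = X.trace) {σ : Matrix m m ℂ}
    (huniq : ∀ ρ, 0 ≤ ρ → ρ.trace = 1 → T ρ = ρ → ρ = σ) {X : Matrix m m ℂ}
    (hfix : T X = X) (h0 : X.trace = 0) : X = 0 := by
  have hstar : T (star X) = star X := by rw [map_star_of_nonneg hT, hfix]
  have htrstar : (star X).trace = 0 := by
    rw [star_eq_conjTranspose, trace_conjTranspose, h0, star_zero]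
  have hre : (ℜ X : Matrix m m ℂ) = 0 :=
    eq_zero_of_isSelfAdjoint_of_map_eq_self hT htr huniq (ℜ X).2
      (by simp [realPart_apply_coe, hfix, hstar]) (by simp [realPart_apply_coe, h0, htrstar])
  have him : (ℑ X : Matrix m m ℂ) = 0 :=
    eq_zero_of_isSelfAdjoint_of_map_eq_self hT htr huniq (ℑ X).2
      (by simp [imaginaryPart_apply_coe, hfix, hstar])
      (by simp [imaginaryPart_apply_coe, h0, htrstar])
  rw [← realPart_add_I_smul_imaginaryPart X, hre, him, smul_zero, add_zero]

end PositiveMaps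

section Analytic

variable {𝕜 E 𝕝 ι : Type*} [NontriviallyNormedField 𝕜] [NormedAddCommGroup E] [NormedSpace 𝕜 E]
  [NormedField 𝕝] [NormedAlgebra 𝕜 𝕝] [Fintype ι] [DecidableEq ι] {M : E → Matrix ι ι 𝕝} {x : E}

theorem analyticAt_det (hM : ∀ i j, AnalyticAt 𝕜 (fun t => M t i j) x) :
    AnalyticAt 𝕜 (fun t => (M t).det) x := by
  simp only [det_apply']
  exact Finset.analyticAt_fun_sum _ fun σ _ =>
    analyticAt_const.mul (Finset.analyticAt_fun_prod _ fun i _ => hM (σ i) i)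

theorem analyticAt_inv_mulVec (hM : ∀ i j, AnalyticAt 𝕜 (fun t => M t i j) x)
    (hdet : (M x).det ≠ 0) (b : ι → 𝕝) (i : ι) :
    AnalyticAt 𝕜 (fun t => ((M t)⁻¹ *ᵥ b) i) x := by
  have hadj : ∀ j k, AnalyticAt 𝕜 (fun t => (M t).adjugate j k) x := fun j k => by
    simp only [adjugate_apply]
    refine analyticAt_det fun a c => ?_
    by_cases ha : a = k
    · simpa [updateRow_apply, ha] using analyticAt_const
    · simpa [updateRow_apply, ha] using hM a c
  simp only [inv_def, Ring.inverse_eq_inv', mulVec, dotProduct, Matrix.smul_apply, smul_eq_mul]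
  exact Finset.analyticAt_fun_sum _ fun j _ =>
    (((analyticAt_det hM).inv hdet).mul (hadj i j)).mul analyticAt_const

end Analytic

section SteadyState

open scoped MatrixOrder

variable {m : Type*} [Fintype m] [DecidableEq m]

def fixedPointSystem (T : Module.End ℂ (Matrix m m ℂ)) : Module.End ℂ (Matrix m m ℂ) :=
  LinearMap.id - T + (traceLinearMap m ℂ ℂ).smulRight 1

lemma fixedPointSystem_apply (T : Module.End ℂ (Matrix m m ℂ)) (X : Matrix m m ℂ) :
    fixedPointSystem T X = X - T X + X.trace • 1 := rfl

lemma fixedPointSystem_apply_eq_one {T : Module.End ℂ (Matrix m m ℂ)} {ρ : Matrix m m ℂ}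
    (hfix : T ρ = ρ) (h1 : ρ.trace = 1) : fixedPointSystem T ρ = 1 := by
  rw [fixedPointSystem_apply, hfix, sub_self, h1, one_smul, zero_add]

lemma fixedPointSystem_injective [Nonempty m] {T : Module.End ℂ (Matrix m m ℂ)}
    (hT : ∀ X, 0 ≤ X → 0 ≤ T X) (htr : ∀ X, (T X).trace = X.trace) {σ : Matrix m m ℂ}
    (huniq : ∀ ρ, 0 ≤ ρ → ρ.trace = 1 → T ρ = ρ → ρ = σ) :
    Function.Injective (fixedPointSystem T) := by
  refine (injective_iff_map_eq_zero _).mpr fun X hX => ?_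
  rw [fixedPointSystem_apply] at hX
  have h0 : X.trace = 0 := by
    have h := congrArg trace hX
    rw [trace_add, trace_sub, htr, sub_self, zero_add, trace_smul, trace_one, trace_zero,
      smul_eq_mul, mul_eq_zero] at h
    exact h.resolve_right (Nat.cast_ne_zero.mpr Fintype.card_ne_zero)
  rw [h0, zero_smul, add_zero, sub_eq_zero] at hX
  exact eq_zero_of_map_eq_self_of_trace_eq_zero hT htr huniq hX.symm h0

theorem exists_analyticOnNhd_eq_fixedPoint {V : Type*} [NormedAddCommGroup V] [NormedSpace ℝ V]
    [Nonempty m] (T : V → Module.End ℂ (Matrix m m ℂ))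
    (hT : ∀ X i j t, AnalyticAt ℝ (fun s => T s X i j) t) {K : Set V}
    (hpos : ∀ t ∈ K, ∀ X, 0 ≤ X → 0 ≤ T t X) (htr : ∀ t ∈ K, ∀ X, (T t X).trace = X.trace)
    (ρ : V → Matrix m m ℂ)
    (hρ : ∀ t ∈ K, (ρ t).trace = 1 ∧ T t (ρ t) = ρ t ∧
      ∀ σ, 0 ≤ σ → σ.trace = 1 → T t σ = σ → σ = ρ t) :
    ∃ U : Set V, ∃ g : V → Matrix m m ℂ, IsOpen U ∧ K ⊆ U ∧ (∀ t ∈ K, g t = ρ t) ∧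
      ∀ i j, AnalyticOnNhd ℝ (fun t => g t i j) U := by
  let b := Matrix.stdBasis ℂ m m
  let A : V → Matrix (m × m) (m × m) ℂ := fun t => LinearMap.toMatrix b b (fixedPointSystem (T t))
  have hA : ∀ k l t, AnalyticAt ℝ (fun s => A s k l) t := fun k l t => by
    simp only [A, LinearMap.toMatrix_apply]
    show AnalyticAt ℝ (fun s => (b l - T s (b l) + (b l).trace • 1 : Matrix m m ℂ) k.1 k.2) t
    simp only [Matrix.sub_apply, Matrix.add_apply, Matrix.smul_apply]
    exact (analyticAt_const.sub (hT _ _ _ t)).add analyticAt_const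
  have hdet : ∀ t ∈ K, (A t).det ≠ 0 := fun t ht => by
    have hinj := fixedPointSystem_injective (hpos t ht) (htr t ht) (hρ t ht).2.2
    rw [LinearMap.det_toMatrix]
    exact ((LinearMap.isUnit_iff_isUnit_det _).mp
      ((LinearMap.isUnit_iff_ker_eq_bot _).mpr (LinearMap.ker_eq_bot.mpr hinj))).ne_zero
  have hsol : ∀ t ∈ K, (A t)⁻¹ *ᵥ b.repr 1 = b.repr (ρ t) := fun t ht => by
    rw [← fixedPointSystem_apply_eq_one (hρ t ht).2.1 (hρ t ht).1,
      ← LinearMap.toMatrix_mulVec_repr b b, mulVec_mulVec,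
      nonsing_inv_mul _ (isUnit_iff_ne_zero.mpr (hdet t ht)), one_mulVec]
  refine ⟨{t | (A t).det ≠ 0}, fun t => Matrix.of fun i j => ((A t)⁻¹ *ᵥ b.repr 1) (i, j),
    ?_, hdet, fun t ht => ?_, fun i j t ht => analyticAt_inv_mulVec (fun k l => hA k l t) ht _ _⟩
  · exact isOpen_ne_fun (continuous_iff_continuousAt.mpr fun t =>
      (analyticAt_det fun k l => hA k l t).continuousAt) continuous_const
  · ext i j
    simp only [of_apply, hsol t ht]
    rfl

end SteadyState

section Channels

open scoped MatrixOrder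

variable {n : ℕ}

lemma IsChannelOn.trace_map {S : Set (Fin n)} {Φ : SOp n} (h : IsChannelOn S Φ) (ρ : Op n) :
    (Φ ρ).trace = ρ.trace := by
  obtain ⟨k, K, -, hsum, hΦ⟩ := h
  simp_rw [hΦ, trace_sum, fun j => trace_mul_cycle (K j) ρ (K j)ᴴ, ← trace_sum, ← Finset.sum_mul,
    hsum, Matrix.one_mul]

lemma IsChannelOn.map_nonneg {S : Set (Fin n)} {Φ : SOp n} (h : IsChannelOn S Φ) {ρ : Op n}
    (hρ : 0 ≤ ρ) : 0 ≤ Φ ρ := by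
  obtain ⟨k, K, -, -, hΦ⟩ := h
  rw [hΦ]
  exact Finset.sum_nonneg fun j _ => star_right_conjugate_nonneg hρ (K j)

lemma card_edgeFinset' {G : SimpleGraph (Fin n)} {e : Sym2 (Fin n)} (he : e ∈ G.edgeSet) :
    (edgeFinset' e).card = 2 := by
  induction e with
  | _ a b =>
    have hpair : edgeFinset' s(a, b) = {a, b} := by
      ext x
      simp [edgeFinset', Sym2.mem_iff]
    rw [hpair, Finset.card_pair (G.ne_of_adj he)]

def edgeChannel (G : SimpleGraph (Fin n)) [DecidableRel G.Adj] (p : Sym2 (Fin n) → ℝ)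
    (D : Fin n → SOp n) (F : Sym2 (Fin n) → SOp n) (eps : Sym2 (Fin n) → ℝ) (ρ : Op n) : Op n :=
  ∑ e ∈ G.edgeFinset, p e • (((1 - eps e) / 2) • (∑ i ∈ edgeFinset' e, D i ρ) + eps e • F e ρ)

variable {G : SimpleGraph (Fin n)} [DecidableRel G.Adj] {p : Sym2 (Fin n) → ℝ}
  {D : Fin n → SOp n} {F : Sym2 (Fin n) → SOp n}

lemma trace_edgeChannel (hpsum : ∑ e ∈ G.edgeFinset, p e = 1)
    (hD : ∀ i X, (D i X).trace = X.trace) (hF : ∀ e ∈ G.edgeSet, ∀ X, (F e X).trace = X.trace)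
    (eps : Sym2 (Fin n) → ℝ) (ρ : Op n) : (edgeChannel G p D F eps ρ).trace = ρ.trace := by
  have hterm : ∀ e ∈ G.edgeFinset, (p e • (((1 - eps e) / 2) • (∑ i ∈ edgeFinset' e, D i ρ)
      + eps e • F e ρ)).trace = (p e : ℂ) * ρ.trace := fun e he => by
    have he' := G.mem_edgeFinset.mp he
    simp only [trace_smul, trace_add, trace_sum, hD, hF e he', Finset.sum_const,
      card_edgeFinset' he', Complex.real_smul, nsmul_eq_mul]
    push_cast
    ring
  rw [edgeChannel, trace_sum, Finset.sum_congr rfl hterm, ← Finset.sum_mul, ← Complex.ofReal_sum,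
    hpsum, Complex.ofReal_one, one_mul]

lemma edgeChannel_nonneg (hp0 : ∀ e, 0 ≤ p e) {eps : Sym2 (Fin n) → ℝ}
    (heps : ∀ e ∈ G.edgeSet, 0 ≤ eps e ∧ eps e ≤ 1) (hD : ∀ i X, 0 ≤ X → 0 ≤ D i X)
    (hF : ∀ e ∈ G.edgeSet, ∀ X, 0 ≤ X → 0 ≤ F e X) {ρ : Op n} (hρ : 0 ≤ ρ) :
    0 ≤ edgeChannel G p D F eps ρ := by
  refine Finset.sum_nonneg fun e he => smul_nonneg (hp0 e) (add_nonneg ?_ ?_)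
  all_goals obtain ⟨h0, h1⟩ := heps e (G.mem_edgeFinset.mp he)
  · exact smul_nonneg (by linarith) (Finset.sum_nonneg fun i _ => hD i ρ hρ)
  · exact smul_nonneg h0 (hF e (G.mem_edgeFinset.mp he) ρ hρ)

lemma analyticAt_edgeChannel_apply (ρ : Op n) (x y : Idx n) (eps₀ : Sym2 (Fin n) → ℝ) :
    AnalyticAt ℝ (fun eps => edgeChannel G p D F eps ρ x y) eps₀ := by
  have hcoord : ∀ e, AnalyticAt ℝ (fun eps : Sym2 (Fin n) → ℝ => eps e) eps₀ := fun e =>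
    (ContinuousLinearMap.proj (R := ℝ) (φ := fun _ : Sym2 (Fin n) => ℝ) e).analyticAt _
  simp only [edgeChannel, Matrix.sum_apply, Matrix.add_apply, Matrix.smul_apply]
  refine Finset.analyticAt_fun_sum _ fun e _ => ?_
  have hweight : AnalyticAt ℝ (fun eps : Sym2 (Fin n) → ℝ => (1 - eps e) / 2) eps₀ :=
    (analyticAt_const.sub (hcoord e)).div_const
  have hDterm : AnalyticAt ℝ (fun eps : Sym2 (Fin n) → ℝ =>
      ((1 - eps e) / 2) • ∑ i ∈ edgeFinset' e, D i ρ x y) eps₀ := hweight.smul analyticAt_const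
  have hFterm : AnalyticAt ℝ (fun eps : Sym2 (Fin n) → ℝ => eps e • F e ρ x y) eps₀ :=
    (hcoord e).smul analyticAt_const
  exact (analyticAt_const (v := p e)).smul (hDterm.add hFterm)

end Channels

theorem steady_state_entries_analytic_general {n : ℕ}
    (G : SimpleGraph (Fin n)) [DecidableRel G.Adj]
    (p : Sym2 (Fin n) → ℝ) (hp0 : ∀ e, 0 ≤ p e)
    (hpsum : ∑ e ∈ G.edgeFinset, p e = 1)
    (D : Fin n → SOp n)
    (hDch : ∀ i, IsChannelOn {i} (D i))
    (F : Sym2 (Fin n) → SOp n)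
    (hF : ∀ e ∈ G.edgeSet, IsChannelOn (edgeQubits e) (F e))
    (E : (Sym2 (Fin n) → ℝ) → SOp n)
    (hE : ∀ eps (ρ : Op n), E eps ρ = ∑ e ∈ G.edgeFinset,
        p e • (((1 - eps e) / 2) • (∑ i ∈ edgeFinset' e, D i ρ)
          + eps e • F e ρ))
    (ρinf : (Sym2 (Fin n) → ℝ) → Op n)
    (hsteady : ∀ eps : Sym2 (Fin n) → ℝ,
      (∀ e ∈ G.edgeSet, 0 ≤ eps e ∧ eps e < 1) →
      IsDensity (ρinf eps) ∧ E eps (ρinf eps) = ρinf eps ∧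
        ∀ ρ : Op n, IsDensity ρ → E eps ρ = ρ → ρ = ρinf eps) :
    ∃ (U : Set (Sym2 (Fin n) → ℝ)) (g : (Sym2 (Fin n) → ℝ) → Op n),
      IsOpen U ∧
      {eps : Sym2 (Fin n) → ℝ | ∀ e ∈ G.edgeSet, 0 ≤ eps e ∧ eps e < 1} ⊆ U ∧
      (∀ eps, (∀ e ∈ G.edgeSet, 0 ≤ eps e ∧ eps e < 1) → g eps = ρinf eps) ∧
      (∀ x y : Idx n, AnalyticOnNhd ℝ (fun eps => g eps x y) U) := by
  have hE' : ∀ eps, ⇑(E eps) = edgeChannel G p D F eps := fun eps => funext (hE eps)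
  refine exists_analyticOnNhd_eq_fixedPoint E (fun ρ x y eps => by
      simpa only [hE'] using analyticAt_edgeChannel_apply ρ x y eps)
    (fun eps heps ρ hρ => ?_) (fun eps _ ρ => ?_) ρinf fun eps heps => ?_
  · rw [hE']
    exact edgeChannel_nonneg hp0 (fun e he => ⟨(heps e he).1, (heps e he).2.le⟩)
      (fun i _ => (hDch i).map_nonneg) (fun e he _ => (hF e he).map_nonneg) hρ
  · rw [hE']
    exact trace_edgeChannel hpsum (fun i => (hDch i).trace_map) (fun e he => (hF e he).trace_map)
      eps ρ
  · obtain ⟨hdens, hfix, huniq⟩ := hsteady eps heps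
    exact ⟨hdens.2, hfix, fun σ hσ h1 => huniq σ ⟨hσ.posSemidef, h1⟩⟩

/-- the matrix entries of the multivariate steady state
`ρ∞(ε⃗)` extend to functions analytic on an open subset of `ℝ^{|E|}`
containing the cube `[0,1)^{|E|}`. -/
theorem steady_state_entries_analytic {n : ℕ}
    (G : SimpleGraph (Fin n)) [DecidableRel G.Adj]
    (p : Sym2 (Fin n) → ℝ) (hp0 : ∀ e, 0 ≤ p e)
    (hpsupp : ∀ e ∉ G.edgeSet, p e = 0)
    (hpsum : ∑ e ∈ G.edgeFinset, p e = 1)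
    (hq : ∀ i : Fin n, 0 < ∑ e ∈ G.edgeFinset.filter (fun e => i ∈ e), p e)
    (D : Fin n → SOp n)
    (hDch : ∀ i, IsChannelOn {i} (D i)) (hDerg : ∀ i, IsErgodic (D i))
    (F : Sym2 (Fin n) → SOp n)
    (hF : ∀ e ∈ G.edgeSet, IsChannelOn (edgeQubits e) (F e))
    (E : (Sym2 (Fin n) → ℝ) → SOp n)
    (hE : ∀ eps (ρ : Op n), E eps ρ = ∑ e ∈ G.edgeFinset,
        p e • (((1 - eps e) / 2) • (∑ i ∈ edgeFinset' e, D i ρ)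
          + eps e • F e ρ))
    (ρinf : (Sym2 (Fin n) → ℝ) → Op n)
    (hsteady : ∀ eps : Sym2 (Fin n) → ℝ,
      (∀ e ∈ G.edgeSet, 0 ≤ eps e ∧ eps e < 1) →
      IsDensity (ρinf eps) ∧ E eps (ρinf eps) = ρinf eps ∧
        ∀ ρ : Op n, IsDensity ρ → E eps ρ = ρ → ρ = ρinf eps) :
    ∃ (U : Set (Sym2 (Fin n) → ℝ)) (g : (Sym2 (Fin n) → ℝ) → Op n),
      IsOpen U ∧
      {eps : Sym2 (Fin n) → ℝ | ∀ e ∈ G.edgeSet, 0 ≤ eps e ∧ eps e < 1} ⊆ U ∧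
      (∀ eps, (∀ e ∈ G.edgeSet, 0 ≤ eps e ∧ eps e < 1) → g eps = ρinf eps) ∧
      (∀ x y : Idx n, AnalyticOnNhd ℝ (fun eps => g eps x y) U) :=
  steady_state_entries_analytic_general G p hp0 hpsum D hDch F hF E hE ρinf hsteady

end

end SSP
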